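/- arXiv:2410.07859 — 2 statements merged into one kernel-verified Lean document; each statement's English description precedes it below -/
import Mathlib

section
/- Let u be an isometry of a metric space and γ a set invariant under u such that for all x ∈ γ and all n ∈ ℕ, |u^n x - x| = n·|ux - x|. Then for any point y of the space and any x ∈ γ, we have |uy - y| ≥ |ux - x|; that is, the infimum defining the translation length is attained on γ. -/
/-- If an isometry u translates an invariant set γ, then for any point y and any x ∈ γ,
`dist (u y) y ≥ dist (u x) x`: the infimum defining the translation length is attained on γ. -/
theorem stmt1 {X : Type*} [MetricSpace X] (u : X → X) (hu : Isometry u)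
    (γ : Set X) (hinv : ∀ x ∈ γ, u x ∈ γ)
    (htrans : ∀ x ∈ γ, ∀ n : ℕ, dist (u^[n] x) x = n * dist (u x) x) :
    ∀ y : X, ∀ x ∈ γ, dist (u x) x ≤ dist (u y) y := by
  intro y x hx
  have hiter : ∀ n : ℕ, Isometry (u^[n]) := by
    intro n
    induction n with
    | zero => simpa using isometry_id
    | succ n ih => rw [Function.iterate_succ]; exact ih.comp hu
  -- d(u^n y, y) ≤ n * d(uy,y)
  have hyn : ∀ n : ℕ, dist (u^[n] y) y ≤ n * dist (u y) y := by
    intro n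
    induction n with
    | zero => simp
    | succ n ih =>
      have : dist (u^[n+1] y) y ≤ dist (u^[n+1] y) (u^[n] y) + dist (u^[n] y) y :=
        dist_triangle _ _ _
      have h2 : dist (u^[n+1] y) (u^[n] y) = dist (u y) y := by
        rw [Function.iterate_succ_apply', ← Function.iterate_succ_apply' u n y]
        exact (hiter n).dist_eq (u y) y
      push_cast
      nlinarith [dist_nonneg (x := u y) (y := y)]
  -- key inequality for each n
  have key : ∀ n : ℕ, (n : ℝ) * dist (u x) x ≤ 2 * dist x y + n * dist (u y) y := by
    intro n
    have h1 : dist (u^[n] x) x ≤ dist (u^[n] x) (u^[n] y) + dist (u^[n] y) y + dist y x :=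
      dist_triangle4 _ _ _ _
    have h2 : dist (u^[n] x) (u^[n] y) = dist x y := (hiter n).dist_eq x y
    have h3 := htrans x hx n
    have h4 := hyn n
    rw [h3, h2] at h1
    rw [dist_comm y x] at h1
    linarith
  by_contra h
  push_neg at h
  obtain ⟨n, hn⟩ := Archimedean.arch (2 * dist x y) (sub_pos.2 h)
  have := key (n + 1)
  simp only [nsmul_eq_mul] at hn
  push_cast at this
  nlinarith [sub_pos.2 h]
end

section
/- Let D be a band diagram (one layer) between two disjoint geodesics γ₁, γ₂ in which every face f satisfies: its boundary decomposes as |∂f| = |∂f ∩ γ₁| + |∂f ∩ γ₂| + |Int(f)|. Define an edge e ∈ ∂D ∩ γ₁ to be 'far from the other side' if either the face f containing e does not meet γ₂, or |Int(f)| > |∂f ∩ γ₂|. Suppose γ₁, γ₂ are geodesic so that for each face: (Case 1) if ∂f ∩ γ₂ = ∅ then |∂f ∩ γ₁| ≤ |Int(f)|; (Case 2) if edges of ∂f ∩ γ₂ are close then |∂f ∩ γ₁| ≤ |Int(f)| + |∂f ∩ γ₂| < 2|Int(f)|; (Case 3) otherwise both intersections are < |Int(f)|. Then the total number of far edges satisfies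 |E| ≤ Σ_f 2|Int(f)|. -/
/-- Summed version over all faces of a band diagram: the total number of edges far from
the other side is at most Σ_f 2·|Int(f)|. Here a f, b f, c f are the numbers of boundary
edges of the face f on γ₁, on γ₂, and intermediate, with the geodesic conditions. -/
theorem stmt16 {F : Type*} [Fintype F] (a b c : F → ℕ)
    (h1 : ∀ f, a f ≤ b f + c f) (h2 : ∀ f, b f ≤ a f + c f) :
    ∑ f : F, ((if b f = 0 then a f else if b f < c f then a f else 0) +
              (if a f = 0 then b f else if a f < c f then b f else 0))
      ≤ ∑ f : F, 2 * c f := by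
  apply Finset.sum_le_sum
  intro f _
  have := h1 f; have := h2 f
  split_ifs <;> omega
end
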